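/- arXiv:1108.2579 — 4 statements merged into one kernel-verified Lean document; each statement's English description precedes it below -/
import Mathlib

section
/- Let m ≥ 2 and a be integers with gcd(a, m) = 1. Then Q_m(a) ≡ (φ(m)/λ(m)) · C_m(a) (mod m), where φ is Euler's totient function and φ(m)/λ(m) is an integer since λ(m) divides φ(m). -/
/-- The Carmichael function `λ(m)`: the smallest positive integer `n` such that
`a ^ n ≡ 1 (mod m)` for every integer `a` coprime to `m`. -/
noncomputable def carmichael (m : ℕ) : ℕ :=
  sInf {n : ℕ | 0 < n ∧ ∀ a : ℤ, Int.gcd a m = 1 → a ^ n ≡ 1 [ZMOD (m : ℤ)]}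

/-- The Carmichael quotient `C_m(a) = (a^{λ(m)} - 1) / m`. -/
noncomputable def carQuot (m : ℕ) (a : ℤ) : ℤ := (a ^ carmichael m - 1) / m

/-- The Euler quotient `Q_m(a) = (a^{φ(m)} - 1) / m`. -/
def eulerQuot (m : ℕ) (a : ℤ) : ℤ := (a ^ Nat.totient m - 1) / m

/-!
Write `φ(m) = λ(m) k`, which is possible because `λ(m)` is the exponent of `(ZMod m)ˣ`, and
`a ^ λ(m) = 1 + m C`. By the binomial theorem `(1 + m C) ^ k ≡ 1 + k m C (mod m²)`, and dividing
by `m` gives `Q_m(a) ≡ k C (mod m)`.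
-/

theorem Int.pow_sub_one_ediv_modEq {m b : ℤ} (k : ℕ) (h : m ∣ b - 1) :
    (b ^ k - 1) / m ≡ k * ((b - 1) / m) [ZMOD m] := by
  rcases eq_or_ne m 0 with rfl | hm
  · simp
  obtain ⟨C, hC⟩ := h
  obtain ⟨c, hc⟩ := sq_dvd_add_pow_sub_sub (m * C) 1 k
  have hpow : b ^ k - 1 = m * (k * C + m * (C ^ 2 * c)) := by
    rw [show b = 1 + m * C by linear_combination hC]
    simp only [one_pow, one_mul] at hc
    linear_combination hc
  rw [hpow, hC, Int.mul_ediv_cancel_left _ hm, Int.mul_ediv_cancel_left _ hm]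
  exact Int.modEq_add_fac_self

theorem forall_pow_modEq_one_iff_forall_units_pow_eq_one (m n : ℕ) :
    (∀ a : ℤ, Int.gcd a m = 1 → a ^ n ≡ 1 [ZMOD m]) ↔ ∀ u : (ZMod m)ˣ, u ^ n = 1 := by
  simp only [← ZMod.intCast_eq_intCast_iff, Int.cast_pow, Int.cast_one]
  constructor
  · intro h u
    have hu : Int.gcd (u : ZMod m).cast m = 1 := by
      rw [← Int.isCoprime_iff_gcd_eq_one, isCoprime_comm, ← ZMod.coe_int_isUnit_iff_isCoprime,
        ZMod.intCast_zmod_cast]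
      exact u.isUnit
    ext
    simpa [ZMod.intCast_zmod_cast] using h _ hu
  · intro h a ha
    have hunit : IsUnit (a : ZMod m) := by
      rw [ZMod.coe_int_isUnit_iff_isCoprime, isCoprime_comm, Int.isCoprime_iff_gcd_eq_one]
      exact ha
    rw [← hunit.unit_spec, ← Units.val_pow_eq_pow_val, h, Units.val_one]

theorem ArithmeticFunction.carmichael_pos {n : ℕ} (hn : n ≠ 0) : 0 < carmichael n := by
  have : NeZero n := ⟨hn⟩
  rw [carmichael_eq_exponent hn]
  exact Monoid.exponent_pos.mpr Monoid.ExponentExists.of_finite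

theorem carmichael_eq_arithmeticFunction_carmichael {m : ℕ} (hm : m ≠ 0) :
    carmichael m = ArithmeticFunction.carmichael m := by
  set L := ArithmeticFunction.carmichael m with hL_def
  have hS : {n : ℕ | 0 < n ∧ ∀ a : ℤ, Int.gcd a m = 1 → a ^ n ≡ 1 [ZMOD m]} =
      {n | 0 < n ∧ L ∣ n} := by
    ext n
    rw [Set.mem_ofPred, Set.mem_ofPred, forall_pow_modEq_one_iff_forall_units_pow_eq_one, hL_def,
      ArithmeticFunction.carmichael_eq_exponent hm, Monoid.exponent_dvd_iff_forall_pow_eq_one]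
  have hL : L ∈ {n | 0 < n ∧ L ∣ n} := ⟨ArithmeticFunction.carmichael_pos hm, dvd_rfl⟩
  obtain ⟨hpos, hdvd⟩ := Nat.sInf_mem ⟨L, hL⟩
  rw [carmichael, hS]
  exact (Nat.sInf_le hL).antisymm (Nat.le_of_dvd hpos hdvd)

theorem carmichael_pos {m : ℕ} (hm : m ≠ 0) : 0 < carmichael m :=
  carmichael_eq_arithmeticFunction_carmichael hm ▸ ArithmeticFunction.carmichael_pos hm

theorem carmichael_dvd_totient {m : ℕ} (hm : m ≠ 0) : carmichael m ∣ m.totient :=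
  carmichael_eq_arithmeticFunction_carmichael hm ▸ ArithmeticFunction.carmichael_dvd_totient m

theorem pow_carmichael_modEq_one {m : ℕ} (hm : m ≠ 0) {a : ℤ} (ha : Int.gcd a m = 1) :
    a ^ carmichael m ≡ 1 [ZMOD m] := by
  rw [carmichael_eq_arithmeticFunction_carmichael hm]
  exact (forall_pow_modEq_one_iff_forall_units_pow_eq_one m _).mpr
    ArithmeticFunction.pow_carmichael a ha

theorem stmt0 (m : ℕ) (hm : 2 ≤ m) (a : ℤ) (ha : Int.gcd a m = 1) :
    eulerQuot m a ≡ ((Nat.totient m / carmichael m : ℕ) : ℤ) * carQuot m a [ZMOD (m : ℤ)] := by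
  have hm0 : m ≠ 0 := by omega
  obtain ⟨k, hk⟩ := carmichael_dvd_totient hm0
  rw [eulerQuot, carQuot, hk, pow_mul, Nat.mul_div_cancel_left k (carmichael_pos hm0)]
  exact Int.pow_sub_one_ediv_modEq k (pow_carmichael_modEq_one hm0 ha).symm.dvd
end

section
/- Let m ≥ 2 be an integer, a and k integers with gcd(a, m) = 1, and α a positive integer. Then C_m(a + k·m^α) ≡ C_m(a) + k·λ(m)·a⁻¹·m^{α−1} (mod m^α), where a⁻¹ denotes a multiplicative inverse of a modulo m^α. (Note gcd(a + k·m^α, m) = 1, so the left-hand Carmichael quotient is defined.) -/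
/-!
By the binomial theorem, `(a + k m^α)^λ ≡ a^λ + λ a^(λ-1) k m^α (mod m^(α+1))`, and
`a^(λ-1) ≡ a⁻¹ (mod m)` because `a^λ ≡ 1 (mod m)`. Since `m C_m(x) = x^λ - 1`, dividing the
resulting congruence by `m` gives the claim.
-/

theorem Int.ModEq.pow_totient {m : ℕ} {a : ℤ} (ha : IsCoprime a m) :
    a ^ m.totient ≡ 1 [ZMOD m] := by
  rw [← ZMod.intCast_eq_intCast_iff, Int.cast_pow, ← ZMod.coe_unitOfIsCoprime a ha,
    ← Units.val_pow_eq_pow_val, ZMod.pow_totient, Units.val_one, Int.cast_one]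

lemma carmichael_spec {m : ℕ} (hm : m ≠ 0) :
    0 < carmichael m ∧ ∀ a : ℤ, Int.gcd a m = 1 → a ^ carmichael m ≡ 1 [ZMOD m] :=
  Nat.sInf_mem (s := {n : ℕ | 0 < n ∧ ∀ a : ℤ, Int.gcd a m = 1 → a ^ n ≡ 1 [ZMOD m]})
    ⟨m.totient, Nat.totient_pos.mpr (Nat.pos_of_ne_zero hm),
      fun _ ha => Int.ModEq.pow_totient (Int.isCoprime_iff_gcd_eq_one.mpr ha)⟩

lemma mul_carQuot {m : ℕ} (hm : m ≠ 0) {a : ℤ} (ha : Int.gcd a m = 1) :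
    m * carQuot m a = a ^ carmichael m - 1 :=
  Int.mul_ediv_cancel' ((carmichael_spec hm).2 a ha).symm.dvd

lemma Int.pow_pred_modEq_of_mul_modEq_one {m a b : ℤ} {n : ℕ} (hn : 0 < n)
    (han : a ^ n ≡ 1 [ZMOD m]) (hab : a * b ≡ 1 [ZMOD m]) : a ^ (n - 1) ≡ b [ZMOD m] :=
  calc a ^ (n - 1) ≡ a ^ (n - 1) * (a * b) [ZMOD m] := by simpa using hab.symm.mul_left _
    _ = a ^ n * b := by rw [← mul_assoc, ← pow_succ, Nat.sub_add_cancel hn]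
    _ ≡ b [ZMOD m] := by simpa using han.mul_right b

lemma Int.add_mul_pow_succ_pow_modEq (m a k : ℤ) (α n : ℕ) :
    (a + k * m ^ (α + 1)) ^ n ≡ a ^ n + n * a ^ (n - 1) * k * m ^ (α + 1)
      [ZMOD m ^ (α + 2)] := by
  have hsq : m ^ (α + 2) ∣ (k * m ^ (α + 1)) ^ 2 :=
    (pow_dvd_pow m (show α + 2 ≤ 2 * α + 2 by omega)).trans ⟨k ^ 2, by ring⟩
  refine (Int.modEq_iff_dvd.mpr ?_).symm
  obtain ⟨c, hc⟩ := hsq.trans (sq_dvd_add_pow_sub_sub (k * m ^ (α + 1)) a n)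
  exact ⟨c, by linear_combination hc⟩

lemma Int.add_mul_pow_succ_pow_modEq_of_pow_modEq_one {m a b k : ℤ} {L : ℕ} (hL : 0 < L)
    (α : ℕ) (haL : a ^ L ≡ 1 [ZMOD m]) (hab : a * b ≡ 1 [ZMOD m]) :
    (a + k * m ^ (α + 1)) ^ L ≡ a ^ L + k * L * b * m ^ (α + 1) [ZMOD m ^ (α + 2)] := by
  have hpred : m ^ (α + 1) * a ^ (L - 1) ≡ m ^ (α + 1) * b [ZMOD m ^ (α + 2)] := by
    rw [pow_succ m (α + 1)]
    exact (Int.pow_pred_modEq_of_mul_modEq_one hL haL hab).mul_left'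
  calc (a + k * m ^ (α + 1)) ^ L
      ≡ a ^ L + L * k * (m ^ (α + 1) * a ^ (L - 1)) [ZMOD m ^ (α + 2)] := by
        convert Int.add_mul_pow_succ_pow_modEq m a k α L using 2; ring
    _ ≡ a ^ L + L * k * (m ^ (α + 1) * b) [ZMOD m ^ (α + 2)] := (hpred.mul_left _).add_left _
    _ = a ^ L + k * L * b * m ^ (α + 1) := by ring

theorem stmt2_general (m : ℕ) (hm : 2 ≤ m) (a k : ℤ) (ha : Int.gcd a m = 1) (α : ℕ)
    (b : ℤ) (hb : a * b ≡ 1 [ZMOD ((m : ℤ) ^ α)]) :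
    carQuot m (a + k * (m : ℤ) ^ α) ≡
      carQuot m a + k * (carmichael m : ℤ) * b * (m : ℤ) ^ (α - 1) [ZMOD ((m : ℤ) ^ α)] := by
  obtain _ | α := α
  · simp [Int.modEq_one]
  have hm0 : m ≠ 0 := by omega
  have hA : Int.gcd (a + k * (m : ℤ) ^ (α + 1)) m = 1 := by
    rwa [pow_succ, ← mul_assoc, Int.gcd_add_mul_right_left]
  have key := Int.add_mul_pow_succ_pow_modEq_of_pow_modEq_one (k := k) (carmichael_spec hm0).1 α
    ((carmichael_spec hm0).2 a ha) (hb.of_dvd (dvd_pow_self _ α.succ_ne_zero))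
  rw [← Int.ModEq.mul_left_cancel_iff' (Int.natCast_ne_zero.mpr hm0), ← pow_succ',
    mul_carQuot hm0 hA, mul_add, mul_carQuot hm0 ha, Nat.add_sub_cancel]
  calc _ ≡ _ [ZMOD (m : ℤ) ^ (α + 2)] := key.sub_right 1
    _ = _ := by ring

theorem stmt2 (m : ℕ) (hm : 2 ≤ m) (a k : ℤ) (ha : Int.gcd a m = 1) (α : ℕ) (hα : 1 ≤ α)
    (b : ℤ) (hb : a * b ≡ 1 [ZMOD ((m : ℤ) ^ α)]) :
    carQuot m (a + k * (m : ℤ) ^ α) ≡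
      carQuot m a + k * (carmichael m : ℤ) * b * (m : ℤ) ^ (α - 1) [ZMOD ((m : ℤ) ^ α)] :=
  stmt2_general m hm a k ha α b hb
end

section
/- Let a be a non-zero integer. If there exists a Carmichael–Wieferich number m with base a (so gcd(a, m) = 1 and m² divides a^{λ(m)} − 1) such that m has an odd prime factor, then there exists a Wieferich prime with base a, i.e., an odd prime p not dividing a such that p² divides a^{p−1} − 1. -/
/-!
Let `p` be the largest prime factor of `m` (it is odd) and `e = v_p(m)`. In
`φ(m) · ∏_{q ∣ m} q = m · ∏_{q ∣ m} (q - 1)` every `q - 1` is prime to `p`, so `v_p(φ(m)) = e - 1`,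
and hence `v_p(λ(m)) < e` because `λ(m) ∣ φ(m)`. Since `a ^ λ(m) - 1` divides `b ^ λ(m) - 1` for
`b = a ^ (p - 1) ≡ 1 (mod p)`, lifting the exponent gives
`2e ≤ v_p(a ^ λ(m) - 1) ≤ v_p(a ^ (p - 1) - 1) + v_p(λ(m)) < v_p(a ^ (p - 1) - 1) + e`,
so `p² ∣ a ^ (p - 1) - 1`.
-/

theorem forall_intCast_pow_modEq_one_iff (m n : ℕ) :
    (∀ a : ℤ, Int.gcd a m = 1 → a ^ n ≡ 1 [ZMOD (m : ℤ)]) ↔ ∀ u : (ZMod m)ˣ, u ^ n = 1 := by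
  have isUnit_iff (a : ℤ) : IsUnit (a : ZMod m) ↔ Int.gcd a m = 1 := by
    rw [ZMod.coe_int_isUnit_iff_isCoprime, Int.isCoprime_iff_gcd_eq_one, Int.gcd_comm]
  constructor
  · intro h u
    have hu : ((ZMod.cast (u : ZMod m) : ℤ) : ZMod m) = u := ZMod.intCast_zmod_cast _
    have := (ZMod.intCast_eq_intCast_iff _ _ _).mpr <|
      h _ ((isUnit_iff _).mp (hu ▸ u.isUnit))
    push_cast [hu] at this
    exact Units.ext (by simpa using this)
  · intro h a ha
    obtain ⟨u, hu⟩ := (isUnit_iff a).mpr ha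
    rw [← ZMod.intCast_eq_intCast_iff]
    push_cast
    rw [← hu, ← Units.val_pow_eq_pow_val, h u, Units.val_one]

theorem Nat.not_pow_factorization_dvd_totient {n p : ℕ} (hp : p ∈ n.primeFactors)
    (hmax : ∀ q ∈ n.primeFactors, q ≤ p) : ¬p ^ n.factorization p ∣ n.totient := by
  intro h
  have hp' : p.Prime := Nat.prime_of_mem_primeFactors hp
  have hcop : Nat.Coprime (p ^ (n.factorization p + 1)) (∏ q ∈ n.primeFactors, (q - 1)) := by
    refine Nat.Coprime.pow_left _ (Nat.Coprime.prod_right fun q hq => ?_)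
    have := (Nat.prime_of_mem_primeFactors hq).two_le
    have := hmax q hq
    exact Nat.coprime_of_lt_prime (n := q - 1) (by omega) (by omega) hp'
  apply Nat.pow_succ_factorization_not_dvd (Nat.mem_primeFactors.mp hp).2.2 hp'
  refine hcop.dvd_of_dvd_mul_right ?_
  rw [← Nat.totient_mul_prod_primeFactors, pow_succ]
  exact mul_dvd_mul h (Finset.dvd_prod_of_mem _ hp)

theorem emultiplicity_pow_sub_one_le {p : ℕ} (hp : p.Prime) (hp_odd : Odd p) {a : ℤ}
    (ha : ¬(p : ℤ) ∣ a) (n : ℕ) :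
    emultiplicity (p : ℤ) (a ^ n - 1) ≤
      emultiplicity (p : ℤ) (a ^ (p - 1) - 1) + emultiplicity p n := by
  have hfermat : (p : ℤ) ∣ a ^ (p - 1) - 1 :=
    (Int.ModEq.pow_card_sub_one_eq_one hp
      ((Nat.prime_iff_prime_int.mp hp).coprime_iff_not_dvd.mpr ha).symm).symm.dvd
  have hpow : ¬(p : ℤ) ∣ a ^ (p - 1) :=
    fun h => ha ((Nat.prime_iff_prime_int.mp hp).dvd_of_dvd_pow h)
  have hdvd : a ^ n - 1 ∣ (a ^ (p - 1)) ^ n - 1 ^ n := by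
    rw [one_pow, ← pow_mul, mul_comm, pow_mul]
    exact sub_one_dvd_pow_sub_one _ _
  calc emultiplicity (p : ℤ) (a ^ n - 1)
      ≤ emultiplicity (p : ℤ) ((a ^ (p - 1)) ^ n - 1 ^ n) :=
        emultiplicity_le_emultiplicity_of_dvd_right hdvd
    _ = emultiplicity (p : ℤ) (a ^ (p - 1) - 1) + emultiplicity p n :=
        Int.emultiplicity_pow_sub_pow hp hp_odd hfermat hpow n

theorem pow_succ_dvd_pow_prime_sub_one_sub_one {p : ℕ} (hp : p.Prime) (hp_odd : Odd p) {a : ℤ}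
    (ha : ¬(p : ℤ) ∣ a) {n e k : ℕ} (hn : ¬p ^ e ∣ n) (h : (p : ℤ) ^ (e + k) ∣ a ^ n - 1) :
    (p : ℤ) ^ (k + 1) ∣ a ^ (p - 1) - 1 := by
  have hle := (le_emultiplicity_of_pow_dvd h).trans (emultiplicity_pow_sub_one_le hp hp_odd ha n)
  have hlt : emultiplicity p n < e := emultiplicity_lt_iff_not_dvd.mpr hn
  apply pow_dvd_of_le_emultiplicity
  generalize emultiplicity (p : ℤ) (a ^ (p - 1) - 1) = A at hle ⊢
  lift emultiplicity p n to ℕ using hlt.ne_top with v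
  induction A using ENat.recTopCoe with
  | top => exact le_top
  | coe A => norm_cast at hle hlt ⊢; omega

theorem stmt17_general (a : ℤ) (m : ℕ) (hm : 2 ≤ m) (hco : Int.gcd a m = 1)
    (hw : (m : ℤ) ^ 2 ∣ a ^ carmichael m - 1)
    (hodd : ∃ p : ℕ, p.Prime ∧ Odd p ∧ p ∣ m) :
    ∃ p : ℕ, p.Prime ∧ Odd p ∧ ¬((p : ℤ) ∣ a) ∧ (p : ℤ) ^ 2 ∣ a ^ (p - 1) - 1 := by
  have hm0 : m ≠ 0 := by omega
  have hne : m.primeFactors.Nonempty := Nat.nonempty_primeFactors.mpr (by omega)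
  obtain ⟨p, hpm, hmax⟩ : ∃ p ∈ m.primeFactors, ∀ q ∈ m.primeFactors, q ≤ p :=
    ⟨_, m.primeFactors.max'_mem hne, m.primeFactors.le_max'⟩
  have hp : p.Prime := Nat.prime_of_mem_primeFactors hpm
  have hp_odd : Odd p := by
    obtain ⟨q, hq, hq_odd, hqm⟩ := hodd
    have : q ≠ 2 := by rintro rfl; exact absurd hq_odd (by decide)
    have := hmax q (Nat.mem_primeFactors.mpr ⟨hq, hqm, hm0⟩)
    exact hp.odd_of_ne_two (by have := hq.two_le; omega)
  have hpa : ¬(p : ℤ) ∣ a := by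
    intro h
    have := Int.dvd_coe_gcd h (Int.natCast_dvd_natCast.mpr (Nat.dvd_of_mem_primeFactors hpm))
    rw [hco, Int.natCast_dvd_natCast, Nat.dvd_one] at this
    exact hp.one_lt.ne' this
  set e := m.factorization p
  have hcarm : ¬p ^ e ∣ carmichael m := fun h =>
    Nat.not_pow_factorization_dvd_totient hpm hmax <| h.trans <| by
      rw [carmichael_eq_arithmeticFunction_carmichael hm0]
      exact ArithmeticFunction.carmichael_dvd_totient m
  have hpe : (p : ℤ) ^ (e + e) ∣ a ^ carmichael m - 1 := by
    rw [← two_mul, pow_mul']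
    exact (pow_dvd_pow_of_dvd (by exact_mod_cast Nat.ordProj_dvd m p) 2).trans hw
  have he : 1 ≤ e := hp.factorization_pos_of_dvd hm0 (Nat.dvd_of_mem_primeFactors hpm)
  refine ⟨p, hp, hp_odd, hpa, (pow_dvd_pow _ (by omega : 2 ≤ e + 1)).trans ?_⟩
  exact pow_succ_dvd_pow_prime_sub_one_sub_one hp hp_odd hpa hcarm hpe

theorem stmt17 (a : ℤ) (ha : a ≠ 0) (m : ℕ) (hm : 2 ≤ m) (hco : Int.gcd a m = 1)
    (hw : (m : ℤ) ^ 2 ∣ a ^ carmichael m - 1)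
    (hodd : ∃ p : ℕ, p.Prime ∧ Odd p ∧ p ∣ m) :
    ∃ p : ℕ, p.Prime ∧ Odd p ∧ ¬((p : ℤ) ∣ a) ∧ (p : ℤ) ^ 2 ∣ a ^ (p - 1) - 1 :=
  stmt17_general a m hm hco hw hodd
end

section
/- Let m ≥ 2 be an integer with gcd(λ(m), m) = 1, and let a be an integer with 0 < a < m, gcd(a, m) = 1, whose multiplicative order modulo m equals 2. Then C_m(a) is not congruent to 0 modulo m; equivalently, m² does not divide a^{λ(m)} − 1. -/
lemma intCast_pow_totient_eq_one {m : ℕ} {a : ℤ} (ha : Int.gcd a m = 1) :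
    (a : ZMod m) ^ m.totient = 1 := by
  obtain ⟨u, hu⟩ :=
    (ZMod.coe_int_isUnit_iff_isCoprime a m).2 (Int.isCoprime_iff_gcd_eq_one.2 ha).symm
  rw [← hu, ← Units.val_pow_eq_pow_val, ZMod.pow_totient, Units.val_one]

lemma intCast_pow_carmichael_eq_one {m : ℕ} (hm : 0 < m) {a : ℤ} (ha : Int.gcd a m = 1) :
    (a : ZMod m) ^ carmichael m = 1 := by
  have hmem : carmichael m ∈
      {n : ℕ | 0 < n ∧ ∀ a : ℤ, Int.gcd a m = 1 → a ^ n ≡ 1 [ZMOD (m : ℤ)]} :=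
    Nat.sInf_mem ⟨m.totient, Nat.totient_pos.2 hm, fun b hb => by
      rw [← ZMod.intCast_eq_intCast_iff]
      push_cast
      exact intCast_pow_totient_eq_one hb⟩
  have := (ZMod.intCast_eq_intCast_iff _ _ _).2 (hmem.2 a ha)
  push_cast at this
  exact this

lemma orderOf_dvd_carmichael {m : ℕ} (hm : 0 < m) {a : ℤ} (ha : Int.gcd a m = 1) :
    orderOf (a : ZMod m) ∣ carmichael m :=
  orderOf_dvd_of_pow_eq_one (intCast_pow_carmichael_eq_one hm ha)

/-- If `b ≡ 1 (mod m)` then `b^k ≡ 1 + k(b - 1) (mod m²)`, so for `k` prime to `m` the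
congruence `b^k ≡ 1 (mod m²)` descends to `b`. -/
theorem sq_dvd_sub_one_of_sq_dvd_pow_sub_one {R : Type*} [CommRing R] [IsDomain R]
    {m b : R} {k : ℕ} (hk : IsCoprime m k) (hb : m ∣ b - 1) (h : m ^ 2 ∣ b ^ k - 1) :
    m ^ 2 ∣ b - 1 := by
  obtain ⟨t, ht⟩ := hb
  rcases eq_or_ne m 0 with rfl | hm
  · simp [ht]
  have hb : b = 1 + m * t := by rw [← ht]; ring
  have hbinom : m ^ 2 ∣ b ^ k - 1 - m * (t * k) := by
    have := sq_dvd_add_pow_sub_sub (m * t) 1 k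
    rw [mul_pow] at this
    simpa [hb, mul_assoc, sub_right_comm] using dvd_trans (dvd_mul_right _ _) this
  have hmtk : m * m ∣ m * (t * k) := by
    rw [← sq]
    simpa using dvd_sub h hbinom
  have hmt : m ∣ t := hk.dvd_of_dvd_mul_right ((mul_dvd_mul_iff_left hm).1 hmtk)
  rw [ht, sq]
  exact mul_dvd_mul_left m hmt

theorem stmt19 (m : ℕ) (hm : 2 ≤ m) (hlm : Nat.gcd (carmichael m) m = 1)
    (a : ℤ) (h0 : 0 < a) (h1 : a < m) (ha : Int.gcd a m = 1)
    (hord : orderOf ((a : ZMod m)) = 2) :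
    ¬((m : ℤ) ^ 2 ∣ a ^ carmichael m - 1) := by
  intro hdvd
  obtain ⟨k, hk⟩ : 2 ∣ carmichael m := hord ▸ orderOf_dvd_carmichael (by omega) ha
  have hkm : IsCoprime (m : ℤ) k := by
    rw [Int.isCoprime_iff_gcd_eq_one, Int.gcd_natCast_natCast]
    exact (Nat.Coprime.symm hlm).coprime_dvd_right (Dvd.intro_left 2 hk.symm)
  have hsq : (m : ℤ) ∣ a ^ 2 - 1 := by
    rw [← ZMod.intCast_zmod_eq_zero_iff_dvd]
    push_cast
    rw [← hord, pow_orderOf_eq_one, sub_self]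
  have hm2 := sq_dvd_sub_one_of_sq_dvd_pow_sub_one hkm hsq (by rwa [← pow_mul, ← hk])
  have ha1 : a ≠ 1 := by
    rintro rfl
    simp at hord
  have hpos : 0 < a ^ 2 - 1 := by nlinarith [lt_of_le_of_ne h0 (Ne.symm ha1)]
  have hlt : a ^ 2 - 1 < (m : ℤ) ^ 2 := by nlinarith
  exact (Int.le_of_dvd hpos hm2).not_gt hlt
end
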